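/- arXiv:2502.00947 — 3 statements merged into one kernel-verified Lean document; each statement's English description precedes it below -/
import Mathlib

section
/- For matrices A ∈ ℝ^{p₁×p₂}, B ∈ ℝ^{p₂×p₃}, C ∈ ℝ^{p₃×p₄}, the two-to-infinity norm satisfies ‖ABC‖_{2→∞} ≤ ‖A‖_∞ · ‖B‖_{2→∞} · ‖C‖₂, where ‖M‖_{2→∞} = max over unit ℓ₂-norm vectors x of ‖Mx‖_∞, ‖A‖_∞ is the maximum absolute row-sum, and ‖C‖₂ the spectral norm. -/
open Matrix

/-- Euclidean norm of a vector. -/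
noncomputable def vnorm {n : ℕ} (v : Fin n → ℝ) : ℝ := Real.sqrt (∑ i, v i ^ 2)

/-- The maximum absolute row-sum norm `‖A‖_∞`. -/
noncomputable def rowSumNorm {n m : ℕ} (A : Matrix (Fin n) (Fin m) ℝ) : ℝ :=
  ⨆ i, ∑ j, |A i j|

/-- The two-to-infinity norm `‖A‖_{2→∞}`: the maximum ℓ₂ norm of the rows of `A`. -/
noncomputable def twoInfNorm {n m : ℕ} (A : Matrix (Fin n) (Fin m) ℝ) : ℝ :=
  ⨆ i, vnorm (A i)

/-- The spectral (ℓ₂ operator) norm of a matrix. -/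
noncomputable def opNorm {n m : ℕ} (A : Matrix (Fin n) (Fin m) ℝ) : ℝ :=
  sSup { c | ∃ x : Fin m → ℝ, vnorm x = 1 ∧ c = vnorm (A.mulVec x) }

lemma vnorm_nonneg {n : ℕ} (v : Fin n → ℝ) : 0 ≤ vnorm v := Real.sqrt_nonneg _

lemma vnorm_eq {n : ℕ} (v : Fin n → ℝ) :
    vnorm v = ‖(WithLp.equiv 2 (Fin n → ℝ)).symm v‖ := by
  rw [EuclideanSpace.norm_eq]
  simp [vnorm, Real.norm_eq_abs, sq_abs]

lemma vnorm_smul {n : ℕ} (c : ℝ) (v : Fin n → ℝ) :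
    vnorm (c • v) = |c| * vnorm v := by
  rw [vnorm_eq, vnorm_eq, ← Real.norm_eq_abs]
  have : (WithLp.equiv 2 (Fin n → ℝ)).symm (c • v)
      = c • (WithLp.equiv 2 (Fin n → ℝ)).symm v := rfl
  rw [this, norm_smul]

lemma vnorm_sum_le {n : ℕ} {ι : Type*} (s : Finset ι) (f : ι → (Fin n → ℝ)) :
    vnorm (∑ k ∈ s, f k) ≤ ∑ k ∈ s, vnorm (f k) := by
  simp only [vnorm_eq]
  have : (WithLp.equiv 2 (Fin n → ℝ)).symm (∑ k ∈ s, f k)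
      = ∑ k ∈ s, (WithLp.equiv 2 (Fin n → ℝ)).symm (f k) := by
    exact map_sum (WithLp.linearEquiv 2 ℝ (Fin n → ℝ)).symm f s
  rw [this]
  exact norm_sum_le _ _

lemma cs {n : ℕ} (v w : Fin n → ℝ) : ∑ i, v i * w i ≤ vnorm v * vnorm w :=
  Real.sum_mul_le_sqrt_mul_sqrt _ _ _

lemma vnorm_sq {n : ℕ} (v : Fin n → ℝ) : vnorm v ^ 2 = ∑ i, v i ^ 2 :=
  Real.sq_sqrt (by positivity)

lemma abs_sum_mul_le {n : ℕ} (v w : Fin n → ℝ) : |∑ i, v i * w i| ≤ vnorm v * vnorm w := by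
  rcases abs_cases (∑ i, v i * w i) with ⟨h, _⟩ | ⟨h, _⟩
  · rw [h]; exact cs v w
  · rw [h]
    have : -∑ i, v i * w i = ∑ i, v i * (-w) i := by simp
    rw [this]
    have hw : vnorm (-w) = vnorm w := by simp [vnorm]
    calc ∑ i, v i * (-w) i ≤ vnorm v * vnorm (-w) := cs v (-w)
      _ = vnorm v * vnorm w := by rw [hw]

lemma mulVec_le_frob {n m : ℕ} (C : Matrix (Fin n) (Fin m) ℝ) (x : Fin m → ℝ) :
    vnorm (C.mulVec x) ≤ Real.sqrt (∑ k, vnorm (C k) ^ 2) * vnorm x := by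
  have h1 : ∀ k, (C.mulVec x k) ^ 2 ≤ vnorm (C k) ^ 2 * vnorm x ^ 2 := by
    intro k
    have : |C.mulVec x k| ≤ vnorm (C k) * vnorm x := by
      simpa [Matrix.mulVec, dotProduct] using abs_sum_mul_le (C k) x
    calc (C.mulVec x k) ^ 2 = |C.mulVec x k| ^ 2 := (sq_abs _).symm
      _ ≤ (vnorm (C k) * vnorm x) ^ 2 := by
          apply pow_le_pow_left₀ (abs_nonneg _) this
      _ = vnorm (C k) ^ 2 * vnorm x ^ 2 := by ring
  calc vnorm (C.mulVec x) = Real.sqrt (∑ k, (C.mulVec x k) ^ 2) := rfl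
    _ ≤ Real.sqrt (∑ k, vnorm (C k) ^ 2 * vnorm x ^ 2) := by
        apply Real.sqrt_le_sqrt; exact Finset.sum_le_sum fun k _ => h1 k
    _ = Real.sqrt ((∑ k, vnorm (C k) ^ 2) * vnorm x ^ 2) := by rw [← Finset.sum_mul]
    _ = Real.sqrt (∑ k, vnorm (C k) ^ 2) * vnorm x := by
        rw [Real.sqrt_mul (by positivity), Real.sqrt_sq (vnorm_nonneg x)]

lemma opNorm_bddAbove {n m : ℕ} (C : Matrix (Fin n) (Fin m) ℝ) :
    BddAbove { c | ∃ x : Fin m → ℝ, vnorm x = 1 ∧ c = vnorm (C.mulVec x) } := by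
  refine ⟨Real.sqrt (∑ k, vnorm (C k) ^ 2), ?_⟩
  rintro c ⟨x, hx, rfl⟩
  simpa [hx] using mulVec_le_frob C x

lemma opNorm_nonneg {n m : ℕ} (C : Matrix (Fin n) (Fin m) ℝ) : 0 ≤ opNorm C := by
  apply Real.sSup_nonneg
  rintro c ⟨x, _, rfl⟩
  exact vnorm_nonneg _

lemma vnorm_eq_zero {n : ℕ} {v : Fin n → ℝ} (h : vnorm v = 0) : v = 0 := by
  have h2 : ∑ i, v i ^ 2 = 0 := by
    have := congrArg (· ^ 2) h
    simpa [vnorm_sq] using this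
  funext i
  have := (Finset.sum_eq_zero_iff_of_nonneg (fun i _ => sq_nonneg (v i))).1 h2 i
    (Finset.mem_univ i)
  exact pow_eq_zero_iff (n := 2) (by norm_num) |>.1 this

lemma vnorm_zero {n : ℕ} : vnorm (0 : Fin n → ℝ) = 0 := by simp [vnorm]

lemma mulVec_le_opNorm {n m : ℕ} (C : Matrix (Fin n) (Fin m) ℝ) (x : Fin m → ℝ) :
    vnorm (C.mulVec x) ≤ opNorm C * vnorm x := by
  by_cases hx : vnorm x = 0
  · rw [vnorm_eq_zero hx]
    simp [Matrix.mulVec_zero, vnorm_zero, hx]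
  · have hpos : 0 < vnorm x := lt_of_le_of_ne (vnorm_nonneg x) (Ne.symm hx)
    set u : Fin m → ℝ := (vnorm x)⁻¹ • x with hu
    have hun : vnorm u = 1 := by
      rw [hu, vnorm_smul, abs_of_nonneg (inv_nonneg.2 hpos.le)]
      field_simp
    have hmem : vnorm (C.mulVec u) ∈
        { c | ∃ y : Fin m → ℝ, vnorm y = 1 ∧ c = vnorm (C.mulVec y) } := ⟨u, hun, rfl⟩
    have hle : vnorm (C.mulVec u) ≤ opNorm C := le_csSup (opNorm_bddAbove C) hmem
    have hmv : C.mulVec u = (vnorm x)⁻¹ • C.mulVec x := by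
      rw [hu]; exact C.mulVec_smul _ _
    rw [hmv, vnorm_smul, abs_of_nonneg (inv_nonneg.2 hpos.le)] at hle
    calc vnorm (C.mulVec x) = ((vnorm x)⁻¹ * vnorm (C.mulVec x)) * vnorm x := by
          field_simp
      _ ≤ opNorm C * vnorm x := by
          apply mul_le_mul_of_nonneg_right hle hpos.le

lemma vecMul_le_opNorm {n m : ℕ} (C : Matrix (Fin n) (Fin m) ℝ) (v : Fin n → ℝ) :
    vnorm (v ᵥ* C) ≤ opNorm C * vnorm v := by
  set w := v ᵥ* C with hw
  have key : vnorm w ^ 2 ≤ vnorm v * vnorm (C.mulVec w) := by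
    have hwj : ∀ j, w j = ∑ k, v k * C k j := fun j => rfl
    have h1 : ∑ j, w j ^ 2 = ∑ k, v k * (C.mulVec w) k := by
      calc ∑ j, w j ^ 2 = ∑ j, ∑ k, v k * C k j * w j := by
            refine Finset.sum_congr rfl fun j _ => ?_
            rw [← Finset.sum_mul, ← hwj j, sq]
        _ = ∑ k, ∑ j, v k * C k j * w j := Finset.sum_comm
        _ = ∑ k, v k * (C.mulVec w) k := by
            refine Finset.sum_congr rfl fun k _ => ?_
            simp [Matrix.mulVec, dotProduct, Finset.mul_sum, mul_assoc]
    calc vnorm w ^ 2 = ∑ j, w j ^ 2 := vnorm_sq w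
      _ = ∑ k, v k * (C.mulVec w) k := h1
      _ ≤ vnorm v * vnorm (C.mulVec w) := cs v _
  by_cases hwz : vnorm w = 0
  · rw [hwz]
    exact mul_nonneg (opNorm_nonneg C) (vnorm_nonneg v)
  · have hwpos : 0 < vnorm w := lt_of_le_of_ne (vnorm_nonneg w) (Ne.symm hwz)
    have h2 : vnorm w ^ 2 ≤ vnorm v * (opNorm C * vnorm w) :=
      key.trans (mul_le_mul_of_nonneg_left (mulVec_le_opNorm C w) (vnorm_nonneg v))
    have h3 : vnorm w * vnorm w ≤ (opNorm C * vnorm v) * vnorm w := by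
      rw [← sq]; linarith [h2]
    exact le_of_mul_le_mul_right h3 hwpos

lemma row_mul {n m k : ℕ} (M : Matrix (Fin n) (Fin m) ℝ) (C : Matrix (Fin m) (Fin k) ℝ)
    (i : Fin n) : (M * C) i = (M i) ᵥ* C := by
  funext j
  simp [Matrix.mul_apply, Matrix.vecMul, dotProduct]

/-- `‖ABC‖_{2→∞} ≤ ‖A‖_∞ · ‖B‖_{2→∞} · ‖C‖₂`. -/
theorem stmt7 (p₁ p₂ p₃ p₄ : ℕ)
    (A : Matrix (Fin p₁) (Fin p₂) ℝ) (B : Matrix (Fin p₂) (Fin p₃) ℝ)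
    (C : Matrix (Fin p₃) (Fin p₄) ℝ) :
    twoInfNorm (A * B * C) ≤ rowSumNorm A * twoInfNorm B * opNorm C := by
  have hrsn : 0 ≤ rowSumNorm A := Real.iSup_nonneg fun i => by positivity
  have htin : 0 ≤ twoInfNorm B := Real.iSup_nonneg fun i => vnorm_nonneg _
  have hop : 0 ≤ opNorm C := opNorm_nonneg C
  have hRHS : 0 ≤ rowSumNorm A * twoInfNorm B * opNorm C := by positivity
  apply Real.iSup_le _ hRHS
  intro i
  have hrow : (A * B * C) i = ((A * B) i) ᵥ* C := row_mul _ _ _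
  have hAB : (A * B) i = ∑ k, A i k • B k := by
    funext j
    simp [Matrix.mul_apply, Finset.sum_apply]
  have hABle : vnorm ((A * B) i) ≤ rowSumNorm A * twoInfNorm B := by
    rw [hAB]
    calc vnorm (∑ k, A i k • B k) ≤ ∑ k, vnorm (A i k • B k) := vnorm_sum_le _ _
      _ = ∑ k, |A i k| * vnorm (B k) := by simp [vnorm_smul]
      _ ≤ ∑ k, |A i k| * twoInfNorm B := by
          apply Finset.sum_le_sum
          intro k _
          have hB : vnorm (B k) ≤ twoInfNorm B := by
            rw [twoInfNorm]
            exact le_ciSup (f := fun k => vnorm (B k))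
              (Set.Finite.bddAbove (Set.finite_range _)) k
          exact mul_le_mul_of_nonneg_left hB (abs_nonneg _)
      _ = (∑ k, |A i k|) * twoInfNorm B := by rw [← Finset.sum_mul]
      _ ≤ rowSumNorm A * twoInfNorm B := by
          apply mul_le_mul_of_nonneg_right _ htin
          rw [rowSumNorm]
          exact le_ciSup (f := fun i => ∑ j, |A i j|)
            (Set.Finite.bddAbove (Set.finite_range _)) i
  calc vnorm ((A * B * C) i) = vnorm (((A * B) i) ᵥ* C) := by rw [hrow]
    _ ≤ opNorm C * vnorm ((A * B) i) := vecMul_le_opNorm C _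
    _ ≤ opNorm C * (rowSumNorm A * twoInfNorm B) :=
        mul_le_mul_of_nonneg_left hABle hop
    _ = rowSumNorm A * twoInfNorm B * opNorm C := by ring
end

section
/- Let X ∈ ℝ^{n×p} (n even, n = 2m) be such that X_{k+m} = −X_k for all k ∈ [m], and let X^k = X + η e_k v(k)ᵀ where v(k) = X_k/‖X_k‖ and η > 0. Then the minimum over all rigid transformations g(x) = Qx + w of the maximum row deviation satisfies min_{g ∈ E(p)} max_{i ∈ [n]} ‖X^k_i − g(X_i)‖ ≥ η/2. -/
open Matrix

/-!
Write `a = X_k`, so that `X_{k+m} = -a`, and let `g(x) = Qx + w`. The residuals of the two rows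
`k` and `k + m` are `r₁ = a + η a/‖a‖ - (Qa + w)` and `r₂ = -a - (-Qa + w)`: the translation
cancels in `r₁ - r₂ = 2 (a + (η/2) a/‖a‖ - Qa)`, and since `‖Qa‖ = ‖a‖` the reverse triangle
inequality gives `‖r₁ - r₂‖ ≥ η`. Hence `‖r₁‖ + ‖r₂‖ ≥ η`, and one of them is at least `η/2`.
-/

theorem Matrix.dotProduct_mulVec_self_of_transpose_mul_self {R n : Type*} [CommRing R]
    [Fintype n] [DecidableEq n] {Q : Matrix n n R} (hQ : Qᵀ * Q = 1) (v : n → R) :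
    Q *ᵥ v ⬝ᵥ Q *ᵥ v = v ⬝ᵥ v := by
  rw [dotProduct_mulVec, vecMul_mulVec, hQ, vecMul_one]

theorem vnorm_eq_sqrt_dotProduct {n : ℕ} (v : Fin n → ℝ) : vnorm v = √(v ⬝ᵥ v) := by
  simp only [vnorm, dotProduct, sq]

theorem vnorm_mulVec_of_transpose_mul_self {n : ℕ} {Q : Matrix (Fin n) (Fin n) ℝ}
    (hQ : Qᵀ * Q = 1) (v : Fin n → ℝ) : vnorm (Q *ᵥ v) = vnorm v := by
  rw [vnorm_eq_sqrt_dotProduct, vnorm_eq_sqrt_dotProduct,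
    dotProduct_mulVec_self_of_transpose_mul_self hQ]

theorem vnorm_eq_norm_toLp {n : ℕ} (v : Fin n → ℝ) :
    vnorm v = ‖(WithLp.toLp 2 v : EuclideanSpace ℝ (Fin n))‖ := by
  simp [vnorm, EuclideanSpace.norm_eq]

section NormedSpace

variable {E : Type*} [NormedAddCommGroup E] [NormedSpace ℝ E]

theorem le_norm_add_smul_normalize_sub {a b : E} (ha : a ≠ 0) (hb : ‖b‖ ≤ ‖a‖) (η : ℝ) :
    η ≤ ‖a + η • ‖a‖⁻¹ • a - b‖ := by
  have ha' : 0 < ‖a‖ := norm_pos_iff.mpr ha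
  calc η = (1 + η * ‖a‖⁻¹) * ‖a‖ - ‖a‖ := by field_simp; ring
    _ ≤ |1 + η * ‖a‖⁻¹| * ‖a‖ - ‖b‖ := by gcongr; exact le_abs_self _
    _ = ‖a + η • ‖a‖⁻¹ • a‖ - ‖b‖ := by
      rw [smul_smul, ← Real.norm_eq_abs, ← norm_smul, add_smul, one_smul]
    _ ≤ ‖a + η • ‖a‖⁻¹ • a - b‖ := norm_sub_norm_le _ _

theorem half_le_norm_residual_or_of_norm_eq {a b : E} (ha : a ≠ 0) (hb : ‖b‖ = ‖a‖)
    (w : E) (η : ℝ) :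
    η / 2 ≤ ‖a + η • ‖a‖⁻¹ • a - (b + w)‖ ∨ η / 2 ≤ ‖-a - (-b + w)‖ := by
  have hdiff : (a + η • ‖a‖⁻¹ • a - (b + w)) - (-a - (-b + w))
      = (2 : ℝ) • (a + (η / 2) • ‖a‖⁻¹ • a - b) := by module
  have hsum : η ≤ ‖a + η • ‖a‖⁻¹ • a - (b + w)‖ + ‖-a - (-b + w)‖ := by
    calc η = 2 * (η / 2) := by ring
      _ ≤ 2 * ‖a + (η / 2) • ‖a‖⁻¹ • a - b‖ := by
        gcongr; exact le_norm_add_smul_normalize_sub ha hb.le _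
      _ = ‖(a + η • ‖a‖⁻¹ • a - (b + w)) - (-a - (-b + w))‖ := by
        rw [hdiff, norm_smul, Real.norm_two]
      _ ≤ _ := norm_sub_le _ _
  by_contra! h
  linarith [h.1, h.2]

end NormedSpace

theorem stmt14_general (m p : ℕ) (η : ℝ)
    (X : Matrix (Fin m ⊕ Fin m) (Fin p) ℝ)
    (hsym : ∀ (k : Fin m) (j : Fin p), X (Sum.inr k) j = - X (Sum.inl k) j)
    (k : Fin m) (hXk : X (Sum.inl k) ≠ 0) :
    ∀ (Q : Matrix (Fin p) (Fin p) ℝ) (w : Fin p → ℝ), Qᵀ * Q = 1 →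
      ∃ i : Fin m ⊕ Fin m,
        η / 2 ≤ vnorm (fun j =>
          (X i j + (if i = Sum.inl k then
            η * ((vnorm (X (Sum.inl k)))⁻¹ * X (Sum.inl k) j) else 0)) -
          (Q.mulVec (X i) j + w j)) := by
  intro Q w hQ
  set a := X (Sum.inl k)
  have hXneg : X (Sum.inr k) = -a := funext (hsym k)
  have ha : (WithLp.toLp 2 a : EuclideanSpace ℝ (Fin p)) ≠ 0 := by simpa using hXk
  have hQa : ‖(WithLp.toLp 2 (Q *ᵥ a) : EuclideanSpace ℝ (Fin p))‖ = ‖WithLp.toLp 2 a‖ := by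
    rw [← vnorm_eq_norm_toLp, ← vnorm_eq_norm_toLp, vnorm_mulVec_of_transpose_mul_self hQ]
  rcases half_le_norm_residual_or_of_norm_eq ha hQa (WithLp.toLp 2 w) η with h | h
  · refine ⟨Sum.inl k, h.trans_eq ?_⟩
    rw [vnorm_eq_norm_toLp, ← vnorm_eq_norm_toLp a]
    congr 1; ext j; simp [a]
  · refine ⟨Sum.inr k, h.trans_eq ?_⟩
    rw [vnorm_eq_norm_toLp, hXneg]
    congr 1; ext j; simp [mulVec_neg]

/-- Separation of the perturbed configuration `X^k = X + η e_k v(k)ᵀ` (with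
`v(k) = X_k/‖X_k‖`) from `X` in the uniform (ℓ_{2→∞}) reconstruction loss: for a
configuration with `X_{k+m} = −X_k` (rows indexed by `Fin m ⊕ Fin m`), for every
rigid motion `g(x) = Qx + w` some row of `X^k − g(X)` has norm at least `η/2`;
hence `min_{g ∈ E(p)} max_i ‖X^k_i − g(X_i)‖ ≥ η/2`. -/
theorem stmt14 (m p : ℕ) (η : ℝ) (hη : 0 < η)
    (X : Matrix (Fin m ⊕ Fin m) (Fin p) ℝ)
    (hsym : ∀ (k : Fin m) (j : Fin p), X (Sum.inr k) j = - X (Sum.inl k) j)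
    (k : Fin m) (hXk : X (Sum.inl k) ≠ 0) :
    ∀ (Q : Matrix (Fin p) (Fin p) ℝ) (w : Fin p → ℝ), Qᵀ * Q = 1 →
      ∃ i : Fin m ⊕ Fin m,
        η / 2 ≤ vnorm (fun j =>
          (X i j + (if i = Sum.inl k then
            η * ((vnorm (X (Sum.inl k)))⁻¹ * X (Sum.inl k) j) else 0)) -
          (Q.mulVec (X i) j + w j)) :=
  stmt14_general m p η X hsym k hXk
end

section
/- Let X ∈ ℝ^{n×p} be centered with all singular values of X/√n equal to γ, rows bounded by ‖X_i‖ ≤ R, and X^k = X + η e_k v(k)ᵀ with v(k) = X_k/‖X_k‖ a unit vector. Then the squared Frobenius distance of the corresponding squared-distance matrices satisfies ‖Δ(X^k) − Δ(X)‖_F² ≤ 16 n (η⁴ + η²(γ + R)²). -/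
open Matrix

/-- The squared Euclidean distance matrix of the rows of `X`. -/
noncomputable def sqDist {n p : ℕ} (X : Matrix (Fin n) (Fin p) ℝ) :
    Matrix (Fin n) (Fin n) ℝ :=
  Matrix.of fun i j => ∑ l, (X i l - X j l) ^ 2

/-! With `t = X *ᵥ v`, the perturbation changes only row and column `k` of `Δ`, by
`η² ‖v‖² + 2η (t_k − t_j)`; squaring and using `(x + y)² ≤ 2x² + 2y²` reduces everything
to `∑_j (t_k − t_j)² = n t_k² + nγ² ‖v‖²`, since centring kills `∑_j t_j` and `XᵀX = nγ² I`
gives `∑_j t_j² = nγ² ‖v‖²`. Cauchy–Schwarz bounds `t_k²` by `‖X_k‖² ≤ R²`. -/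

open Finset

theorem vnorm_nonneg_s15 {p : ℕ} (x : Fin p → ℝ) : 0 ≤ vnorm x :=
  Real.sqrt_nonneg _

theorem sq_vnorm {p : ℕ} (x : Fin p → ℝ) : vnorm x ^ 2 = ∑ l, x l ^ 2 :=
  Real.sq_sqrt (by positivity)

theorem sum_sq_inv_vnorm_mul_le_one {p : ℕ} (x : Fin p → ℝ) :
    ∑ l, ((vnorm x)⁻¹ * x l) ^ 2 ≤ 1 := by
  rw [← sum_congr rfl fun l _ => (mul_pow _ (x l) 2).symm, ← mul_sum, ← sq_vnorm, ← mul_pow]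
  exact pow_le_one₀ (mul_nonneg (inv_nonneg.2 (vnorm_nonneg_s15 x)) (vnorm_nonneg_s15 x))
    inv_mul_le_one

theorem sum_sum_le_sum_row_add_sum_col {ι M : Type*} [Fintype ι] [DecidableEq ι]
    [AddCommMonoid M] [PartialOrder M] [IsOrderedAddMonoid M]
    (F : ι → ι → M) (k : ι) (hF : ∀ i j, 0 ≤ F i j)
    (hF0 : ∀ i j, i ≠ k → j ≠ k → F i j = 0) :
    ∑ i, ∑ j, F i j ≤ ∑ j, F k j + ∑ i, F i k := by
  have hcol : ∀ i ∈ univ.erase k, ∑ j, F i j = F i k := fun i hi =>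
    sum_eq_single k (fun j _ hj => hF0 i j (ne_of_mem_erase hi) hj) (by simp)
  rw [← add_sum_erase _ _ (mem_univ k), sum_congr rfl hcol]
  exact add_le_add_right
    (sum_le_sum_of_subset_of_nonneg (erase_subset _ _) fun i _ _ => hF i k) _

variable {n p : ℕ}

theorem sqDist_add_vecMulVec_sub_apply (X : Matrix (Fin n) (Fin p) ℝ) (e : Fin n → ℝ)
    (c : Fin p → ℝ) (i j : Fin n) :
    (sqDist (X + vecMulVec e c) - sqDist X) i j =
      (e i - e j) ^ 2 * ∑ l, c l ^ 2 + 2 * (e i - e j) * ((X *ᵥ c) i - (X *ᵥ c) j) := by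
  simp only [sqDist, Matrix.sub_apply, of_apply, Matrix.add_apply, vecMulVec_apply, mulVec,
    dotProduct, mul_sum, ← sum_sub_distrib, ← sum_add_distrib]
  exact sum_congr rfl fun l _ => by ring

theorem sq_sq_mul_add_two_mul_le {a b s η : ℝ} (ha : a ^ 2 ≤ η ^ 2) (hs₀ : 0 ≤ s)
    (hs₁ : s ≤ 1) :
    (a ^ 2 * s + 2 * a * b) ^ 2 ≤ 2 * η ^ 4 + 8 * η ^ 2 * b ^ 2 := by
  have ha' : a ^ 2 * s ≤ η ^ 2 := by nlinarith [sq_nonneg a]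
  calc (a ^ 2 * s + 2 * a * b) ^ 2 ≤ 2 * ((a ^ 2 * s) ^ 2 + (2 * a * b) ^ 2) := add_sq_le
    _ ≤ 2 * η ^ 4 + 8 * η ^ 2 * b ^ 2 := by
      nlinarith [sq_nonneg b, mul_nonneg (sq_nonneg a) hs₀]

theorem sum_mulVec_eq_zero (X : Matrix (Fin n) (Fin p) ℝ) (hX : ∀ l, ∑ i, X i l = 0)
    (c : Fin p → ℝ) : ∑ i, (X *ᵥ c) i = 0 := by
  simp only [mulVec, dotProduct]
  rw [sum_comm]
  simp [← sum_mul, hX]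

theorem sum_mulVec_sq (X : Matrix (Fin n) (Fin p) ℝ) {a : ℝ} (hX : Xᵀ * X = a • 1)
    (c : Fin p → ℝ) : ∑ i, (X *ᵥ c) i ^ 2 = a * ∑ l, c l ^ 2 := by
  calc ∑ i, (X *ᵥ c) i ^ 2 = (X *ᵥ c) ⬝ᵥ (X *ᵥ c) := by simp [dotProduct, sq]
    _ = c ⬝ᵥ ((Xᵀ * X) *ᵥ c) := by
      rw [dotProduct_mulVec, ← mulVec_mulVec, mulVec_transpose, dotProduct_comm]
    _ = a * ∑ l, c l ^ 2 := by simp [hX, smul_mulVec, dotProduct, sq, mul_sum, mul_left_comm]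

theorem sum_sq_sqDist_add_single_vecMulVec_sub_le (X : Matrix (Fin n) (Fin p) ℝ) (k : Fin n)
    (η : ℝ) {c : Fin p → ℝ} (hc : ∑ l, c l ^ 2 ≤ 1) :
    ∑ i, ∑ j, ((sqDist (X + vecMulVec (Pi.single k η) c) - sqDist X) i j) ^ 2 ≤
      4 * n * η ^ 4 + 16 * η ^ 2 * ∑ j, ((X *ᵥ c) k - (X *ᵥ c) j) ^ 2 := by
  set t := X *ᵥ c
  set e : Fin n → ℝ := Pi.single k η
  set D := sqDist (X + vecMulVec e c) - sqDist X
  have hD : ∀ i j, D i j = (e i - e j) ^ 2 * ∑ l, c l ^ 2 + 2 * (e i - e j) * (t i - t j) :=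
    sqDist_add_vecMulVec_sub_apply X e c
  have hc₀ : 0 ≤ ∑ l, c l ^ 2 := by positivity
  have he : ∀ i j, (e i - e j) ^ 2 ≤ η ^ 2 := by
    intro i j
    simp only [e, Pi.single_apply]
    split_ifs <;> simp [sq_nonneg]
  have hrow : ∀ j, D k j ^ 2 ≤ 2 * η ^ 4 + 8 * η ^ 2 * (t k - t j) ^ 2 := fun j => by
    rw [hD]
    exact sq_sq_mul_add_two_mul_le (he k j) hc₀ hc
  have hcol : ∀ i, D i k ^ 2 ≤ 2 * η ^ 4 + 8 * η ^ 2 * (t k - t i) ^ 2 := fun i => by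
    rw [hD, sub_sq_comm (t k)]
    exact sq_sq_mul_add_two_mul_le (he i k) hc₀ hc
  calc ∑ i, ∑ j, D i j ^ 2 ≤ ∑ j, D k j ^ 2 + ∑ i, D i k ^ 2 :=
        sum_sum_le_sum_row_add_sum_col _ k (fun _ _ => sq_nonneg _)
          fun i j hi hj => by simp [hD, e, hi, hj]
    _ ≤ ∑ j, (2 * η ^ 4 + 8 * η ^ 2 * (t k - t j) ^ 2)
        + ∑ i, (2 * η ^ 4 + 8 * η ^ 2 * (t k - t i) ^ 2) :=
        add_le_add (sum_le_sum fun j _ => hrow j) (sum_le_sum fun i _ => hcol i)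
    _ = 4 * n * η ^ 4 + 16 * η ^ 2 * ∑ j, (t k - t j) ^ 2 := by
        simp only [sum_add_distrib, ← mul_sum, sum_const, card_univ, Fintype.card_fin,
          nsmul_eq_mul]
        ring

theorem sum_sq_mulVec_sub (X : Matrix (Fin n) (Fin p) ℝ) (hcent : ∀ l, ∑ i, X i l = 0)
    {a : ℝ} (hX : Xᵀ * X = a • 1) (c : Fin p → ℝ) (k : Fin n) :
    ∑ j, ((X *ᵥ c) k - (X *ᵥ c) j) ^ 2 = n * (X *ᵥ c) k ^ 2 + a * ∑ l, c l ^ 2 := by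
  simp only [sub_sq, sum_add_distrib, sum_sub_distrib, ← mul_sum, sum_mulVec_eq_zero X hcent,
    sum_mulVec_sq X hX, sum_const, card_univ, Fintype.card_fin, nsmul_eq_mul]
  ring

theorem mulVec_apply_sq_le (X : Matrix (Fin n) (Fin p) ℝ) (c : Fin p → ℝ) (k : Fin n) :
    (X *ᵥ c) k ^ 2 ≤ (∑ l, X k l ^ 2) * ∑ l, c l ^ 2 := by
  simpa [mulVec, dotProduct] using sum_mul_sq_le_sq_mul_sq univ (X k) c

theorem stmt15_general (n p : ℕ) (γ η R : ℝ) (hγ : 0 ≤ γ)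
    (X : Matrix (Fin n) (Fin p) ℝ) (k : Fin n)
    (hcent : ∀ j, ∑ i, X i j = 0)
    (hXtX : Xᵀ * X = (γ ^ 2 * n) • (1 : Matrix (Fin p) (Fin p) ℝ))
    (hrows : ∀ i, vnorm (X i) ≤ R) :
    ∑ i, ∑ j,
      ((sqDist (Matrix.of fun i j =>
          X i j + (if i = k then η * ((vnorm (X k))⁻¹ * X k j) else 0)) -
        sqDist X) i j) ^ 2
      ≤ 16 * n * (η ^ 4 + η ^ 2 * (γ + R) ^ 2) := by
  set v : Fin p → ℝ := fun l => (vnorm (X k))⁻¹ * X k l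
  have hpert : (Matrix.of fun i j => X i j + if i = k then η * v j else 0) =
      X + vecMulVec (Pi.single k η) v := by
    ext i j
    by_cases hi : i = k <;> simp [vecMulVec_apply, hi]
  have hv : ∑ l, v l ^ 2 ≤ 1 := sum_sq_inv_vnorm_mul_le_one (X k)
  have hR : 0 ≤ R := (vnorm_nonneg_s15 _).trans (hrows k)
  have hrow : ∑ l, X k l ^ 2 ≤ R ^ 2 := by
    rw [← sq_vnorm]
    exact pow_le_pow_left₀ (vnorm_nonneg_s15 _) (hrows k) 2
  have htk : (X *ᵥ v) k ^ 2 ≤ R ^ 2 :=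
    (mulVec_apply_sq_le X v k).trans
      (by simpa using mul_le_mul hrow hv (by positivity) (sq_nonneg R))
  rw [hpert]
  calc _ ≤ 4 * n * η ^ 4 + 16 * η ^ 2 * ∑ j, ((X *ᵥ v) k - (X *ᵥ v) j) ^ 2 :=
        sum_sq_sqDist_add_single_vecMulVec_sub_le X k η hv
    _ = 4 * n * η ^ 4 + 16 * η ^ 2 * (n * (X *ᵥ v) k ^ 2 + γ ^ 2 * n * ∑ l, v l ^ 2) := by
        rw [sum_sq_mulVec_sub X hcent hXtX]
    _ ≤ 16 * n * (η ^ 4 + η ^ 2 * (γ + R) ^ 2) := by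
        have hnη : 0 ≤ n * η ^ 2 := by positivity
        nlinarith [mul_le_mul_of_nonneg_left htk hnη,
          mul_le_mul_of_nonneg_left hv (mul_nonneg hnη (sq_nonneg γ)),
          mul_nonneg hnη (mul_nonneg hγ hR), mul_nonneg hnη (sq_nonneg η)]

/-- For a centered configuration with all singular values of `X/√n` equal to `γ`,
rows bounded by `R`, and `X^k = X + η e_k v(k)ᵀ` with `v(k) = X_k/‖X_k‖`, the
squared Frobenius distance of the squared-distance matrices satisfies
`‖Δ(X^k) − Δ(X)‖_F² ≤ 16 n (η⁴ + η² (γ + R)²)`. -/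
theorem stmt15 (n p : ℕ) (hn : 0 < n) (γ η R : ℝ) (hγ : 0 ≤ γ) (hη : 0 ≤ η)
    (X : Matrix (Fin n) (Fin p) ℝ) (k : Fin n)
    (hcent : ∀ j, ∑ i, X i j = 0)
    (hXtX : Xᵀ * X = (γ ^ 2 * n) • (1 : Matrix (Fin p) (Fin p) ℝ))
    (hrows : ∀ i, vnorm (X i) ≤ R)
    (hXk : X k ≠ 0) :
    ∑ i, ∑ j,
      ((sqDist (Matrix.of fun i j =>
          X i j + (if i = k then η * ((vnorm (X k))⁻¹ * X k j) else 0)) -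
        sqDist X) i j) ^ 2
      ≤ 16 * n * (η ^ 4 + η ^ 2 * (γ + R) ^ 2) :=
  stmt15_general n p γ η R hγ X k hcent hXtX hrows
end
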